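/- arXiv:1008.0276 — 2 statements merged into one kernel-verified Lean document; each statement's English description precedes it below -/
import Mathlib

section
/- Let X be a real random variable such that P(|X| > x) · x^α → c for some constants c > 0 and 0 < α ≤ 2 as x → ∞ (Paretian tail of index α). Define Y = sgn(X)|X|^{α/2}. Then lim_{y→∞} y^2 P(|Y| > y) / E[Y^2 · 1{|Y| ≤ y}] = 0. -/
/-! The power `Z = Y² = |X|^α` has a tail `P(Z > s) ~ c / s`. Hence the ratio in question is
`y² P(Z > y²) / E[Z; Z ≤ y²]`, whose numerator tends to `c`. The truncated mean `E[Z; Z ≤ T]`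
diverges: each block `T < Z ≤ 6T` contributes at least `T P(T < Z ≤ 6T) ≥ c/2 - 2c/6 = c/6`
for large `T`, so it grows at least logarithmically. -/

open MeasureTheory Filter Topology

lemma Real.sign_mul_abs_rpow_half_sq (x p : ℝ) (hp : 0 < p) :
    (Real.sign x * |x| ^ (p / 2)) ^ 2 = |x| ^ p := by
  have hsq : (|x| ^ (p / 2)) ^ 2 = |x| ^ p := by
    rw [← Real.rpow_natCast, ← Real.rpow_mul (abs_nonneg x)]
    norm_num
  rcases lt_trichotomy x 0 with hx | rfl | hx
  · rw [Real.sign_of_neg hx, mul_pow, hsq]; norm_num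
  · simp [Real.zero_rpow hp.ne']
  · rw [Real.sign_of_pos hx, mul_pow, hsq]; norm_num

lemma tendsto_atTop_atTop_of_monotone_of_add_le_map_mul {F : ℝ → ℝ} (hF : Monotone F)
    {q δ T₀ : ℝ} (hq : 1 ≤ q) (hδ : 0 < δ) (hT₀ : 0 ≤ T₀)
    (hstep : ∀ T ≥ T₀, F T + δ ≤ F (q * T)) : Tendsto F atTop atTop := by
  have hgeom : ∀ n : ℕ, T₀ ≤ q ^ n * T₀ := fun n =>
    le_mul_of_one_le_left hT₀ (one_le_pow₀ hq)
  have hgrowth : ∀ n : ℕ, F T₀ + n * δ ≤ F (q ^ n * T₀) := by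
    intro n
    induction n with
    | zero => simp
    | succ n ih =>
      have := hstep _ (hgeom n)
      rw [pow_succ, mul_comm _ q, mul_assoc]
      push_cast
      linarith
  refine tendsto_atTop_atTop_of_monotone hF fun b => ?_
  obtain ⟨n, hn⟩ := exists_nat_ge ((b - F T₀) / δ)
  refine ⟨q ^ n * T₀, le_trans ?_ (hgrowth n)⟩
  rw [div_le_iff₀ hδ] at hn
  linarith

section TruncatedMean

variable {Ω : Type*} [MeasurableSpace Ω] {μ : Measure Ω} {Z : Ω → ℝ}

lemma tendsto_mul_measureReal_abs_rpow_gt {X : Ω → ℝ} {α c : ℝ} (hα : 0 < α)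
    (htail : Tendsto (fun x => μ.real {ω | x < |X ω|} * x ^ α) atTop (𝓝 c)) :
    Tendsto (fun s => s * μ.real {ω | s < |X ω| ^ α}) atTop (𝓝 c) := by
  refine (htail.comp (tendsto_rpow_atTop (inv_pos.mpr hα))).congr' ?_
  filter_upwards [eventually_ge_atTop 0] with s hs
  have hset : {ω | s ^ α⁻¹ < |X ω|} = {ω | s < |X ω| ^ α} := by
    ext ω
    exact Real.rpow_inv_lt_iff_of_pos hs (abs_nonneg _) hα
  rw [Function.comp_apply, hset, ← Real.rpow_mul hs, inv_mul_cancel₀ hα.ne', Real.rpow_one,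
    mul_comm]

variable [IsFiniteMeasure μ]

lemma integrableOn_setOf_le_of_nonneg (hZm : Measurable Z) (hZ : 0 ≤ Z) (T : ℝ) :
    IntegrableOn Z {ω | Z ω ≤ T} μ := by
  refine Measure.integrableOn_of_bounded (M := T) (measure_ne_top μ _)
    hZm.aestronglyMeasurable ?_
  rw [ae_restrict_iff' (measurableSet_le hZm measurable_const)]
  exact Eventually.of_forall fun ω hω => by rwa [Real.norm_of_nonneg (hZ ω)]

lemma monotone_setIntegral_setOf_le (hZm : Measurable Z) (hZ : 0 ≤ Z) :
    Monotone fun T => ∫ ω in {ω | Z ω ≤ T}, Z ω ∂μ := fun _ b hab =>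
  setIntegral_mono_set (integrableOn_setOf_le_of_nonneg hZm hZ b) (Eventually.of_forall hZ)
    (Eventually.of_forall fun _ h => le_trans h hab)

lemma mul_measureReal_sub_le_setIntegral_sub (hZm : Measurable Z) (hZ : 0 ≤ Z) {a b : ℝ}
    (hab : a ≤ b) :
    a * (μ.real {ω | a < Z ω} - μ.real {ω | b < Z ω}) ≤
      (∫ ω in {ω | Z ω ≤ b}, Z ω ∂μ) - ∫ ω in {ω | Z ω ≤ a}, Z ω ∂μ := by
  set B := {ω | a < Z ω} \ {ω | b < Z ω}
  have hB : MeasurableSet B :=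
    (measurableSet_lt measurable_const hZm).diff (measurableSet_lt measurable_const hZm)
  have hsub : {ω | b < Z ω} ⊆ {ω | a < Z ω} := fun _ h => lt_of_le_of_lt hab h
  have hunion : {ω | Z ω ≤ b} = {ω | Z ω ≤ a} ∪ B := by
    ext ω
    simp only [B, Set.mem_ofPred_eq, Set.mem_union, Set.mem_sdiff, not_lt]
    constructor
    · intro h
      exact (le_or_gt (Z ω) a).imp id fun h' => ⟨h', h⟩
    · rintro (h | ⟨-, h⟩) <;> linarith
  have hdisj : Disjoint {ω | Z ω ≤ a} B :=
    Set.disjoint_left.mpr fun _ (h₁ : _ ≤ a) (h₂ : _ ∈ B) => not_lt.mpr h₁ h₂.1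
  have hBint : IntegrableOn Z B μ :=
    (integrableOn_setOf_le_of_nonneg hZm hZ b).mono_set fun _ h => (not_lt.mp h.2 : _ ≤ b)
  have hsplit : ∫ ω in {ω | Z ω ≤ b}, Z ω ∂μ =
      (∫ ω in {ω | Z ω ≤ a}, Z ω ∂μ) + ∫ ω in B, Z ω ∂μ := by
    rw [hunion, setIntegral_union hdisj hB (integrableOn_setOf_le_of_nonneg hZm hZ a) hBint]
  have hB_ge : a * μ.real B ≤ ∫ ω in B, Z ω ∂μ :=
    setIntegral_ge_of_const_le_real hB (measure_ne_top μ _) (fun _ h => h.1.le) hBint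
  rw [measureReal_sdiff hsub (measurableSet_lt measurable_const hZm)] at hB_ge
  linarith

theorem tendsto_setIntegral_setOf_le_atTop (hZm : Measurable Z) (hZ : 0 ≤ Z) {c : ℝ}
    (hc : 0 < c) (htail : Tendsto (fun s => s * μ.real {ω | s < Z ω}) atTop (𝓝 c)) :
    Tendsto (fun T => ∫ ω in {ω | Z ω ≤ T}, Z ω ∂μ) atTop atTop := by
  obtain ⟨T₀, hT₀⟩ := eventually_atTop.mp <| (eventually_ge_atTop 0).and <|
    htail.eventually (Ioo_mem_nhds (half_lt_self hc) (by linarith : c < 2 * c))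
  refine tendsto_atTop_atTop_of_monotone_of_add_le_map_mul
    (monotone_setIntegral_setOf_le hZm hZ) (by norm_num : (1 : ℝ) ≤ 6)
    (by positivity : 0 < c / 6) (hT₀ T₀ le_rfl).1 fun T hT => ?_
  obtain ⟨hT_nonneg, hlow, -⟩ := hT₀ T hT
  obtain ⟨-, -, hup⟩ := hT₀ (6 * T) (by linarith)
  have := mul_measureReal_sub_le_setIntegral_sub (μ := μ) hZm hZ (by linarith : T ≤ 6 * T)
  nlinarith

end TruncatedMean

theorem dan_ratio_condition_of_paretian_tail_general
    {Ω : Type*} [MeasurableSpace Ω] (P : Measure Ω) [IsProbabilityMeasure P]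
    (X : Ω → ℝ) (hX : Measurable X)
    (c α : ℝ) (hc : 0 < c) (hα0 : 0 < α)
    (htail : Tendsto (fun x => (P {ω | |X ω| > x}).toReal * x ^ α) atTop (nhds c))
    (Y : Ω → ℝ)
    (hY : ∀ ω, Y ω = Real.sign (X ω) * |X ω| ^ (α / 2)) :
    Tendsto (fun y =>
        y ^ 2 * (P {ω | |Y ω| > y}).toReal / ∫ ω in {ω | |Y ω| ≤ y}, (Y ω) ^ 2 ∂P)
      atTop (nhds 0) := by
  set Z : Ω → ℝ := fun ω => |X ω| ^ α
  have hZm : Measurable Z := (Real.continuous_rpow_const hα0.le).measurable.comp hX.abs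
  have hZ : 0 ≤ Z := fun ω => Real.rpow_nonneg (abs_nonneg _) α
  have hYZ : ∀ ω, Y ω ^ 2 = Z ω := fun ω => by
    rw [hY, Real.sign_mul_abs_rpow_half_sq _ _ hα0]
  have hZtail := tendsto_mul_measureReal_abs_rpow_gt hα0 htail
  have hnum := hZtail.comp (tendsto_pow_atTop two_ne_zero)
  have hden := (tendsto_setIntegral_setOf_le_atTop hZm hZ hc hZtail).comp
    (tendsto_pow_atTop two_ne_zero)
  refine (hnum.div_atTop hden).congr' ?_
  filter_upwards [eventually_ge_atTop 0] with y hy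
  have hiff : ∀ ω, y < |Y ω| ↔ y ^ 2 < Z ω := fun ω => by
    rw [← hYZ, sq_lt_sq, abs_of_nonneg hy]
  have hgt : {ω | |Y ω| > y} = {ω | y ^ 2 < Z ω} := Set.ext hiff
  have hle : {ω | |Y ω| ≤ y} = {ω | Z ω ≤ y ^ 2} := Set.ext fun ω => not_lt.symm.trans
    ((not_congr (hiff ω)).trans not_lt)
  simp only [Function.comp_apply, hgt, hle, hYZ]
  rfl

theorem dan_ratio_condition_of_paretian_tail
    {Ω : Type*} [MeasurableSpace Ω] (P : Measure Ω) [IsProbabilityMeasure P]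
    (X : Ω → ℝ) (hX : Measurable X)
    (c α : ℝ) (hc : 0 < c) (hα0 : 0 < α) (hα2 : α ≤ 2)
    (htail : Tendsto (fun x => (P {ω | |X ω| > x}).toReal * x ^ α) atTop (nhds c))
    (Y : Ω → ℝ)
    (hY : ∀ ω, Y ω = Real.sign (X ω) * |X ω| ^ (α / 2)) :
    Tendsto (fun y =>
        y ^ 2 * (P {ω | |Y ω| > y}).toReal / ∫ ω in {ω | |Y ω| ≤ y}, (Y ω) ^ 2 ∂P)
      atTop (nhds 0) :=
  dan_ratio_condition_of_paretian_tail_general P X hX c α hc hα0 htail Y hY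
end

section
/- Let X_1, …, X_n be i.i.d. symmetric random variables with common distribution in the domain of attraction of an α-stable law with α ≤ 1 (so that, as established via Giné–Götze–Mason, E[∑_{i=1}^n |X_i|^{2α} / (∑_{i=1}^n |X_i|^α)^2] = o(1)). Then E[(∑_{i=1}^n X_i / V_{n,α})^2] → 0 as n → ∞, where V_{n,α} = (∑_{i=1}^n |X_i|^α)^{1/α}. -/
/-!
Flipping the sign of one coordinate preserves the joint law of `(X_0, …, X_{n-1})` (independence
and symmetry) and the normalizer `V = (∑ |X_i|^α)^(1/α)`, while it changes the sign of
`X_i X_j / V²` for `j ≠ i`; so the cross terms have mean zero and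
`E[(S_n / V)²] = E[∑ X_i² / V²]`.

Pointwise, with `T = ∑ |X_i|^(2α)` and `W = ∑ |X_i|^α`, subadditivity of `t ↦ t^α` for `α ≤ 1`
gives `(∑ X_i²)^α ≤ T`, hence `∑ X_i² / V² ≤ (T / W²)^(1/α) ≤ T / W²` because `T ≤ W²` and
`1/α ≥ 1`. The expectation of `T / W²` tends to zero by hypothesis.
-/

open MeasureTheory Filter Finset

theorem rpow_sum_le_sum_rpow {ι : Type*} (s : Finset ι) {f : ι → ℝ} (hf : ∀ i ∈ s, 0 ≤ f i)
    {p : ℝ} (hp0 : 0 < p) (hp1 : p ≤ 1) :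
    (∑ i ∈ s, f i) ^ p ≤ ∑ i ∈ s, f i ^ p :=
  le_sum_of_subadditive_on_pred (· ^ p) (0 ≤ ·) (Real.zero_rpow hp0.ne').le
    (fun _ _ ha hb => Real.rpow_add_le_add_rpow ha hb hp0.le hp1)
    (fun _ _ => add_nonneg) f hf

theorem abs_rpow_two_mul (a α : ℝ) : |a| ^ (2 * α) = (|a| ^ α) ^ 2 := by
  rw [mul_comm, Real.rpow_mul (abs_nonneg a), Real.rpow_two]

theorem sq_rpow_eq_abs_rpow_two_mul (a α : ℝ) : (a ^ 2) ^ α = |a| ^ (2 * α) := by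
  rw [← sq_abs, ← Real.rpow_two, ← Real.rpow_mul (abs_nonneg a)]

theorem integral_eq_zero_of_comp_eq_neg {E : Type*} [MeasurableSpace E] {μ : Measure E}
    {σ : E → E} (hσ : MeasurePreserving σ μ μ) {f : E → ℝ} (hf : AEStronglyMeasurable f μ)
    (hodd : ∀ x, f (σ x) = -f x) : ∫ x, f x ∂μ = 0 := by
  have h : ∫ x, f x ∂μ = -∫ x, f x ∂μ := by
    calc ∫ x, f x ∂μ = ∫ x, f x ∂μ.map σ := by rw [hσ.map_eq]
      _ = ∫ x, f (σ x) ∂μ := integral_map hσ.aemeasurable (by rwa [hσ.map_eq])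
      _ = -∫ x, f x ∂μ := by simp_rw [hodd, integral_neg]
  linarith

section SelfNormalizer

variable {ι : Type*} [Fintype ι]

noncomputable def selfNormalizer (α : ℝ) (x : ι → ℝ) : ℝ := (∑ i, |x i| ^ α) ^ (1 / α)

@[fun_prop]
theorem measurable_selfNormalizer (α : ℝ) : Measurable (selfNormalizer (ι := ι) α) := by
  unfold selfNormalizer
  fun_prop

section Pointwise

variable (x : ι → ℝ) {α : ℝ}

theorem sum_abs_rpow_two_mul_le_sq (α : ℝ) :
    ∑ i, |x i| ^ (2 * α) ≤ (∑ i, |x i| ^ α) ^ 2 := by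
  simp_rw [abs_rpow_two_mul]
  exact sum_sq_le_sq_sum_of_nonneg fun i _ => by positivity

theorem sum_sq_le_rpow_sum_abs_rpow_two_mul (hα0 : 0 < α) (hα1 : α ≤ 1) :
    ∑ i, x i ^ 2 ≤ (∑ i, |x i| ^ (2 * α)) ^ (1 / α) := by
  have hsub : (∑ i, x i ^ 2) ^ α ≤ ∑ i, |x i| ^ (2 * α) := by
    simpa only [sq_rpow_eq_abs_rpow_two_mul] using
      rpow_sum_le_sum_rpow univ (fun i _ => sq_nonneg (x i)) hα0 hα1
  calc ∑ i, x i ^ 2 = ((∑ i, x i ^ 2) ^ α) ^ (1 / α) := by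
        rw [one_div, Real.rpow_rpow_inv (by positivity) hα0.ne']
    _ ≤ (∑ i, |x i| ^ (2 * α)) ^ (1 / α) := by gcongr

theorem selfNormalizer_sq (α : ℝ) :
    selfNormalizer α x ^ 2 = ((∑ i, |x i| ^ α) ^ 2) ^ (1 / α) := by
  rw [selfNormalizer, ← Real.rpow_two, ← Real.rpow_two, ← Real.rpow_mul (by positivity),
    ← Real.rpow_mul (by positivity), mul_comm]

theorem sum_sq_le_selfNormalizer_sq (hα0 : 0 < α) (hα1 : α ≤ 1) :
    ∑ i, x i ^ 2 ≤ selfNormalizer α x ^ 2 := by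
  rw [selfNormalizer_sq]
  calc ∑ i, x i ^ 2 ≤ (∑ i, |x i| ^ (2 * α)) ^ (1 / α) :=
        sum_sq_le_rpow_sum_abs_rpow_two_mul x hα0 hα1
    _ ≤ ((∑ i, |x i| ^ α) ^ 2) ^ (1 / α) := by
        gcongr
        exact sum_abs_rpow_two_mul_le_sq x α

theorem sum_sq_div_selfNormalizer_sq_le (hα0 : 0 < α) (hα1 : α ≤ 1) :
    (∑ i, x i ^ 2) / selfNormalizer α x ^ 2 ≤
      (∑ i, |x i| ^ (2 * α)) / (∑ i, |x i| ^ α) ^ 2 := by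
  set T := ∑ i, |x i| ^ (2 * α)
  set W := ∑ i, |x i| ^ α
  have hT : 0 ≤ T := by positivity
  have hTW : T / W ^ 2 ≤ 1 := div_le_one_of_le₀ (sum_abs_rpow_two_mul_le_sq x α) (sq_nonneg W)
  rw [selfNormalizer_sq]
  calc (∑ i, x i ^ 2) / (W ^ 2) ^ (1 / α) ≤ T ^ (1 / α) / (W ^ 2) ^ (1 / α) := by
        gcongr
        exact sum_sq_le_rpow_sum_abs_rpow_two_mul x hα0 hα1
    _ = (T / W ^ 2) ^ (1 / α) := (Real.div_rpow hT (sq_nonneg W) _).symm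
    _ ≤ T / W ^ 2 := Real.rpow_le_self_of_le_one (by positivity) hTW (one_le_one_div hα0 hα1)

theorem abs_mul_le_sum_sq (i j : ι) : |x i * x j| ≤ ∑ k, x k ^ 2 := by
  have hle : ∀ k, |x k| ≤ √(∑ k, x k ^ 2) := fun k =>
    Real.abs_le_sqrt <|
      single_le_sum (f := fun k => x k ^ 2) (fun k _ => sq_nonneg (x k)) (mem_univ k)
  calc |x i * x j| = |x i| * |x j| := abs_mul _ _
    _ ≤ √(∑ k, x k ^ 2) * √(∑ k, x k ^ 2) :=
        mul_le_mul (hle i) (hle j) (abs_nonneg _) (by positivity)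
    _ = ∑ k, x k ^ 2 := Real.mul_self_sqrt (by positivity)

theorem abs_mul_div_selfNormalizer_sq_le_one (hα0 : 0 < α) (hα1 : α ≤ 1) (i j : ι) :
    |x i * x j / selfNormalizer α x ^ 2| ≤ 1 := by
  rw [abs_div, abs_sq]
  exact div_le_one_of_le₀
    ((abs_mul_le_sum_sq x i j).trans (sum_sq_le_selfNormalizer_sq x hα0 hα1)) (sq_nonneg _)

end Pointwise

section Symmetric

variable [DecidableEq ι]

def negCoord (i : ι) (x : ι → ℝ) : ι → ℝ := fun j => if j = i then -x j else x j

theorem measurePreserving_negCoord (ν : ι → Measure ℝ) [∀ j, SigmaFinite (ν j)] {i : ι}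
    (hν : (ν i).map Neg.neg = ν i) :
    MeasurePreserving (negCoord i) (Measure.pi ν) (Measure.pi ν) := by
  have hflip : ∀ j, MeasurePreserving (if j = i then Neg.neg else id) (ν j) (ν j) := by
    intro j
    split_ifs with h
    · exact ⟨measurable_neg, h ▸ hν⟩
    · exact .id _
  convert measurePreserving_pi ν ν hflip using 1
  ext x j
  simp only [negCoord, apply_ite (fun g : ℝ → ℝ => g (x j)), id]

theorem selfNormalizer_negCoord (α : ℝ) (i : ι) (x : ι → ℝ) :
    selfNormalizer α (negCoord i x) = selfNormalizer α x := by
  simp only [selfNormalizer, negCoord, apply_ite abs, abs_neg, ite_self]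

theorem integral_mul_div_selfNormalizer_sq_eq_zero (ν : ι → Measure ℝ) [∀ j, SigmaFinite (ν j)]
    {i j : ι} (hν : (ν i).map Neg.neg = ν i) (hij : i ≠ j) (α : ℝ) :
    ∫ x, x i * x j / selfNormalizer α x ^ 2 ∂Measure.pi ν = 0 := by
  refine integral_eq_zero_of_comp_eq_neg (measurePreserving_negCoord ν hν)
    (by fun_prop : Measurable _).aestronglyMeasurable fun x => ?_
  simp only [selfNormalizer_negCoord, negCoord, if_pos, if_neg hij.symm, neg_mul, neg_div]

theorem integral_sq_sum_div_selfNormalizer_eq (ν : ι → Measure ℝ)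
    [∀ j, IsFiniteMeasure (ν j)] (hν : ∀ j, (ν j).map Neg.neg = ν j)
    {α : ℝ} (hα0 : 0 < α) (hα1 : α ≤ 1) :
    ∫ x, ((∑ i, x i) / selfNormalizer α x) ^ 2 ∂Measure.pi ν =
      ∫ x, (∑ i, x i ^ 2) / selfNormalizer α x ^ 2 ∂Measure.pi ν := by
  have hint : ∀ i j, Integrable (fun x => x i * x j / selfNormalizer α x ^ 2) (Measure.pi ν) :=
    fun i j => (integrable_const 1).mono' (by fun_prop : Measurable _).aestronglyMeasurable
      (ae_of_all _ fun x => abs_mul_div_selfNormalizer_sq_le_one x hα0 hα1 i j)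
  calc ∫ x, ((∑ i, x i) / selfNormalizer α x) ^ 2 ∂Measure.pi ν
        = ∫ x, ∑ i, ∑ j, x i * x j / selfNormalizer α x ^ 2 ∂Measure.pi ν := by
        simp_rw [div_pow, sq (∑ i, _), sum_mul_sum, sum_div]
    _ = ∑ i, ∑ j, ∫ x, x i * x j / selfNormalizer α x ^ 2 ∂Measure.pi ν := by
        rw [integral_finsetSum _ fun i _ => integrable_finsetSum _ fun j _ => hint i j]
        exact sum_congr rfl fun i _ => integral_finsetSum _ fun j _ => hint i j
    _ = ∑ i, ∫ x, x i * x i / selfNormalizer α x ^ 2 ∂Measure.pi ν :=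
        sum_congr rfl fun i _ => sum_eq_single_of_mem i (mem_univ i) fun j _ hji =>
          integral_mul_div_selfNormalizer_sq_eq_zero ν (hν i) hji.symm α
    _ = ∫ x, (∑ i, x i ^ 2) / selfNormalizer α x ^ 2 ∂Measure.pi ν := by
        rw [← integral_finsetSum _ fun i _ => hint i i]
        simp_rw [sq, sum_div]

theorem integral_sq_sum_div_selfNormalizer_le (ν : ι → Measure ℝ)
    [∀ j, IsFiniteMeasure (ν j)] (hν : ∀ j, (ν j).map Neg.neg = ν j)
    {α : ℝ} (hα0 : 0 < α) (hα1 : α ≤ 1) :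
    ∫ x, ((∑ i, x i) / selfNormalizer α x) ^ 2 ∂Measure.pi ν ≤
      ∫ x, (∑ i, |x i| ^ (2 * α)) / (∑ i, |x i| ^ α) ^ 2 ∂Measure.pi ν := by
  rw [integral_sq_sum_div_selfNormalizer_eq ν hν hα0 hα1]
  refine integral_mono_of_nonneg (ae_of_all _ fun x => by positivity) ?_
    (ae_of_all _ fun x => sum_sq_div_selfNormalizer_sq_le x hα0 hα1)
  refine (integrable_const 1).mono' (by fun_prop : Measurable _).aestronglyMeasurable
    (ae_of_all _ fun x => ?_)
  rw [Real.norm_of_nonneg (by positivity)]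
  exact div_le_one_of_le₀ (sum_abs_rpow_two_mul_le_sq x α) (sq_nonneg _)

end Symmetric

end SelfNormalizer

theorem variance_self_normalized_tendsto_zero_general
    {Ω : Type*} [MeasurableSpace Ω] (P : Measure Ω) [IsProbabilityMeasure P]
    (X : ℕ → Ω → ℝ) (hmeas : ∀ i, Measurable (X i))
    (hindep : ProbabilityTheory.iIndepFun X P)
    (hsym : ∀ i, Measure.map (fun ω => -X i ω) P = Measure.map (X i) P)
    (α : ℝ) (hα0 : 0 < α) (hα1 : α ≤ 1)
    (hGGM : Tendsto (fun n => ∫ ω,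
        (∑ i ∈ Finset.range n, |X i ω| ^ (2 * α)) /
          (∑ i ∈ Finset.range n, |X i ω| ^ α) ^ 2 ∂P) atTop (nhds 0)) :
    Tendsto (fun n => ∫ ω,
        ((∑ i ∈ Finset.range n, X i ω) /
          (∑ i ∈ Finset.range n, |X i ω| ^ α) ^ (1 / α)) ^ 2 ∂P)
      atTop (nhds 0) := by
  refine squeeze_zero (fun n => integral_nonneg fun ω => sq_nonneg _) (fun n => ?_) hGGM
  set Y : Ω → Fin n → ℝ := fun ω k => X k ω
  have hY : Measurable Y := measurable_pi_lambda _ fun k => hmeas k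
  have hlaw : P.map Y = Measure.pi fun k : Fin n => P.map (X k) :=
    (hindep.precomp Fin.val_injective).map_fun_eq_pi_map fun k => (hmeas k).aemeasurable
  have (k : Fin n) : IsProbabilityMeasure (P.map (X k)) :=
    Measure.isProbabilityMeasure_map (hmeas k).aemeasurable
  have hsymLaw : ∀ k : Fin n, (P.map (X k)).map Neg.neg = P.map (X k) := fun k => by
    rw [Measure.map_map measurable_neg (hmeas k)]
    exact hsym k
  have h := integral_sq_sum_div_selfNormalizer_le _ hsymLaw hα0 hα1
  rw [← hlaw, integral_map hY.aemeasurable (by fun_prop : Measurable _).aestronglyMeasurable,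
    integral_map hY.aemeasurable (by fun_prop : Measurable _).aestronglyMeasurable] at h
  simpa only [Y, selfNormalizer, Finset.sum_range] using h

theorem variance_self_normalized_tendsto_zero
    {Ω : Type*} [MeasurableSpace Ω] (P : Measure Ω) [IsProbabilityMeasure P]
    (X : ℕ → Ω → ℝ) (hmeas : ∀ i, Measurable (X i))
    (hindep : ProbabilityTheory.iIndepFun X P)
    (hident : ∀ i j, Measure.map (X i) P = Measure.map (X j) P)
    (hsym : ∀ i, Measure.map (fun ω => -X i ω) P = Measure.map (X i) P)
    (α : ℝ) (hα0 : 0 < α) (hα1 : α ≤ 1)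
    (hGGM : Tendsto (fun n => ∫ ω,
        (∑ i ∈ Finset.range n, |X i ω| ^ (2 * α)) /
          (∑ i ∈ Finset.range n, |X i ω| ^ α) ^ 2 ∂P) atTop (nhds 0)) :
    Tendsto (fun n => ∫ ω,
        ((∑ i ∈ Finset.range n, X i ω) /
          (∑ i ∈ Finset.range n, |X i ω| ^ α) ^ (1 / α)) ^ 2 ∂P)
      atTop (nhds 0) :=
  variance_self_normalized_tendsto_zero_general P X hmeas hindep hsym α hα0 hα1 hGGM
end
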